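/- (Completeness of the pruning condition.) Let DB be an uncertain database all of whose existential probabilities lie in [0,1], with each item x carrying a weight w(x) ∈ [0,1], and let minWES > 0. If α is a nonempty pattern with WES(α) ≥ minWES, then every nonempty prefix γ of α satisfies wExpSup^cap(γ) ≥ minWES; hence mining with the pruning condition wExpSup^cap ≥ minWES finds the complete set of weighted frequent patterns. -/

import Mathlib

variable {I : Type*}

/-- An uncertain sequence: a finite list of (item, existential probability) pairs. -/
abbrev USeq (I : Type*) := List (I × ℝ)

/-- An uncertain database: a finite list of uncertain sequences. -/
abbrev UDB (I : Type*) := List (USeq I)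

/-- `α` occurs in `S`: some sublist of `S` has item list `α`. -/
def Occurs (α : List I) (S : USeq I) : Prop :=
  ∃ o : USeq I, o.Sublist S ∧ o.map Prod.fst = α

/-- Maximum occurrence probability of pattern `α` in `S`
(`0` if `α` has no occurrence in `S`; `1` for the empty pattern). -/
noncomputable def maxPrS [DecidableEq I] (α : List I) (S : USeq I) : ℝ :=
  WithBot.unbotD 0 ((S.sublists.filter fun o => decide (o.map Prod.fst = α)).map
      fun o => (o.map Prod.snd).prod).maximum

/-- Greedy projection: `projSeq α S = some S'` iff `α` occurs in `S`, in which case `S'`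
is the suffix of `S` strictly after the last matched position of the greedy (leftmost)
occurrence of `α` in `S`.  For the empty pattern it is `S` itself. -/
def projSeq [DecidableEq I] : List I → USeq I → Option (USeq I)
  | [], S => some S
  | _ :: _, [] => none
  | i :: α, (x, _) :: rest =>
      if x = i then projSeq α rest else projSeq (i :: α) rest

/-- The projected database `DB|α`. -/
def projDB [DecidableEq I] (α : List I) (DB : UDB I) : UDB I :=
  DB.filterMap (projSeq α)

/-- `P̂_D(i)`: maximum probability of an entry with item `i` over all sequences of `D`
(`0` if `i` occurs in no sequence of `D`). -/
noncomputable def Phat [DecidableEq I] (D : UDB I) (i : I) : ℝ :=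
  WithBot.unbotD 0 ((D.flatten.filter fun e => decide (e.1 = i)).map Prod.snd).maximum

/-- `maxPr(α)` relative to `DB`: the product of per-step maximum probabilities over the
successively projected databases. -/
noncomputable def maxPrDB [DecidableEq I] (DB : UDB I) (α : List I) : ℝ :=
  ∏ k : Fin α.length, Phat (projDB (α.take k.val) DB) (α.get k)

/-- Expected support of `α` in `DB`. -/
noncomputable def expSup [DecidableEq I] (DB : UDB I) (α : List I) : ℝ :=
  (DB.map fun S => maxPrS α S).sum

/-- `expSup^cap` of a nonempty pattern (junk value `0` on the empty pattern). -/
noncomputable def expSupCap [DecidableEq I] (DB : UDB I) (α : List I) : ℝ :=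
  match α.getLast? with
  | none => 0
  | some i =>
      maxPrDB DB α.dropLast *
        ((projDB α.dropLast DB).map fun S' => maxPrS [i] S').sum

/-- Number of sequences of `D` in which item `i` occurs. -/
def supCount [DecidableEq I] (D : UDB I) (i : I) : ℕ :=
  (D.filter fun S => decide (i ∈ S.map Prod.fst)).length

/-- `expSupport^top` of a nonempty pattern (junk value `0` on the empty pattern). -/
noncomputable def expSupTop [DecidableEq I] (DB : UDB I) (α : List I) : ℝ :=
  match α.getLast? with
  | none => 0
  | some i =>
      maxPrDB DB α.dropLast * Phat (projDB α.dropLast DB) i *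
        (supCount (projDB α.dropLast DB) i : ℝ)

/-- Item `i` occurs in some sequence of `D`. -/
def ItemOccursIn (D : UDB I) (i : I) : Prop :=
  ∃ S ∈ D, i ∈ S.map Prod.fst

/-- `sWeight`: average weight of the items of a pattern. -/
noncomputable def sWeight (w : I → ℝ) (α : List I) : ℝ :=
  (α.map w).sum / (α.length : ℝ)

/-- Maximum weight among the items of a pattern (`0` for the empty pattern). -/
noncomputable def mxWs (w : I → ℝ) (α : List I) : ℝ :=
  WithBot.unbotD 0 (α.map w).maximum

/-- Maximum weight among items occurring in some sequence of `D` (`0` if none). -/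
noncomputable def mxWDB (w : I → ℝ) (D : UDB I) : ℝ :=
  WithBot.unbotD 0 (D.flatten.map fun e => w e.1).maximum

/-- `wgt^cap`. -/
noncomputable def wgtCap [DecidableEq I] (DB : UDB I) (w : I → ℝ) (α : List I) : ℝ :=
  max (mxWDB w (projDB α.dropLast DB)) (mxWs w α)

/-- Weighted expected support. -/
noncomputable def WES [DecidableEq I] (DB : UDB I) (w : I → ℝ) (α : List I) : ℝ :=
  expSup DB α * sWeight w α

/-- `wExpSup^cap`. -/
noncomputable def wExpSupCap [DecidableEq I] (DB : UDB I) (w : I → ℝ) (α : List I) : ℝ :=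
  expSupCap DB α * wgtCap DB w α

/-!
Write the prefix as `γ ++ [i]` and the pattern as `γ ++ i :: β`. An occurrence of the pattern in
`S` splits into an occurrence of `γ`, an entry `e` with item `i`, and a tail. Matching `γ` greedily
leaves the longest suffix `S|γ`, so `e` and the tail lie in `S|γ`; likewise the `k`-th matched
entry of `γ` lies in the projection of `S` by the first `k - 1` items of `γ`, so its probability
is at most the `k`-th factor of `maxPr(γ)`. Since the tail has probability at most `1`, this gives
`maxPr_S(γ ++ i :: β) ≤ maxPr(γ) · maxPr_{S|γ}([i])`, and summing, `expSup ≤ expSup^cap`.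
Every item of the pattern is in `γ ++ [i]` or occurs in some `S|γ`, so `sWeight ≤ wgt^cap` as
soon as the pattern occurs somewhere; if it occurs nowhere, its `WES` is `0`.
-/

open List

section Maximum

variable {R : Type*} [LinearOrder R] {l : List R} {a c d : R}

lemma List.le_unbotD_maximum_of_mem (ha : a ∈ l) : a ≤ WithBot.unbotD d l.maximum :=
  WithBot.le_unbotD (le_maximum_of_mem' ha)

lemma List.unbotD_maximum_le (hd : d ≤ c) (h : ∀ a ∈ l, a ≤ c) :
    WithBot.unbotD d l.maximum ≤ c :=
  (WithBot.unbotD_le_iff fun _ => hd).mpr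
    (maximum_le_of_forall_le fun a ha => WithBot.coe_le_coe.mpr (h a ha))

lemma List.le_unbotD_maximum (hd : c ≤ d) (h : ∀ a ∈ l, c ≤ a) :
    c ≤ WithBot.unbotD d l.maximum := by
  cases l with
  | nil => simpa
  | cons a l => exact (h a mem_cons_self).trans (le_unbotD_maximum_of_mem mem_cons_self)

end Maximum

section Entries

variable {α : Type*} {o : List (α × ℝ)}

lemma prod_snd_nonneg (h : ∀ e ∈ o, 0 ≤ e.2) : 0 ≤ (o.map Prod.snd).prod :=
  prod_nonneg fun a ha => by
    obtain ⟨e, he, rfl⟩ := mem_map.mp ha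
    exact h e he

lemma prod_snd_le_one (h : ∀ e ∈ o, e.2 ∈ Set.Icc (0 : ℝ) 1) : (o.map Prod.snd).prod ≤ 1 := by
  induction o with
  | nil => simp
  | cons e o ih =>
    simp only [mem_cons, forall_eq_or_imp] at h
    exact mul_le_one₀ h.1.2 (prod_snd_nonneg fun f hf => (h.2 f hf).1) (ih h.2)

end Entries

lemma List.sum_map_filterMap {α β M : Type*} [AddMonoid M] (f : α → Option β) (g : β → M)
    (l : List α) : ((l.filterMap f).map g).sum = (l.map fun a => ((f a).map g).getD 0).sum := by
  induction l with
  | nil => rfl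
  | cons a l ih => cases h : f a <;> simp [h, ih]

section Projection

variable [DecidableEq I]

@[simp]
lemma projSeq_nil (S : USeq I) : projSeq [] S = some S := by
  cases S <;> rfl

lemma projSeq_suffix {γ : List I} {S T : USeq I} (h : projSeq γ S = some T) : T <:+ S := by
  fun_induction projSeq γ S with
  | case1 => simp_all
  | case2 => simp at h
  | case3 _ _ _ _ ih => exact (ih h).trans (suffix_cons _ _)
  | case4 _ _ _ _ _ _ ih => exact (ih h).trans (suffix_cons _ _)

lemma projSeq_append (γ δ : List I) (S : USeq I) :
    projSeq (γ ++ δ) S = (projSeq γ S).bind (projSeq δ) := by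
  fun_induction projSeq γ S <;> simp_all [projSeq]

-- The greedy match of a single item is leftmost, so it leaves the longest possible suffix.
lemma exists_projSeq_singleton_of_cons_sublist {e : I × ℝ} {o S : USeq I} (h : e :: o <+ S) :
    ∃ T, projSeq [e.1] S = some T ∧ o <+ T := by
  induction S with
  | nil => simp at h
  | cons x rest ih =>
    rw [sublist_cons_iff] at h
    by_cases hx : x.1 = e.1
    · refine ⟨rest, by simp [projSeq, hx], ?_⟩
      rcases h with h | ⟨r, hr, h⟩
      · exact (sublist_cons_self e o).trans h
      · exact (cons.inj hr).2 ▸ h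
    · have h : e :: o <+ rest := by
        rcases h with h | ⟨r, hr, _⟩
        · exact h
        · exact absurd (congrArg Prod.fst (cons.inj hr).1).symm hx
      obtain ⟨T, hT, hoT⟩ := ih h
      exact ⟨T, by simp [projSeq, hx, hT], hoT⟩

lemma exists_projSeq_of_append_sublist {o₁ o₂ S : USeq I} (h : o₁ ++ o₂ <+ S) :
    ∃ T, projSeq (o₁.map Prod.fst) S = some T ∧ o₂ <+ T := by
  induction o₁ generalizing S with
  | nil => exact ⟨S, projSeq_nil S, h⟩
  | cons e o₁ ih =>
    obtain ⟨S₁, hS₁, hsub⟩ := exists_projSeq_singleton_of_cons_sublist h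
    obtain ⟨T, hT, ho₂⟩ := ih hsub
    refine ⟨T, ?_, ho₂⟩
    rw [map_cons, ← singleton_append, projSeq_append, hS₁]
    exact hT

lemma Occurs.exists_projSeq {γ δ : List I} {S : USeq I} (h : Occurs (γ ++ δ) S) :
    ∃ T, projSeq γ S = some T ∧ Occurs δ T := by
  obtain ⟨o, ho, hm⟩ := h
  obtain ⟨o₁, o₂, rfl, rfl, rfl⟩ := map_eq_append_iff.mp hm
  obtain ⟨T, hT, ho₂⟩ := exists_projSeq_of_append_sublist ho
  exact ⟨T, hT, o₂, ho₂, rfl⟩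

lemma mem_projDB {γ : List I} {DB : UDB I} {T : USeq I} :
    T ∈ projDB γ DB ↔ ∃ S ∈ DB, projSeq γ S = some T :=
  mem_filterMap

lemma projDB_forall {P : I × ℝ → Prop} {DB : UDB I} (h : ∀ S ∈ DB, ∀ e ∈ S, P e)
    (γ : List I) : ∀ T ∈ projDB γ DB, ∀ e ∈ T, P e := by
  intro T hT e he
  obtain ⟨S, hS, hST⟩ := mem_projDB.mp hT
  exact h S hS e ((projSeq_suffix hST).subset he)

@[simp]
lemma projDB_nil (DB : UDB I) : projDB [] DB = DB := by
  simp [projDB]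

lemma projDB_append (γ δ : List I) (DB : UDB I) :
    projDB (γ ++ δ) DB = projDB δ (projDB γ DB) := by
  simp only [projDB, filterMap_filterMap, projSeq_append]

end Projection

section Probability

variable [DecidableEq I] {DB : UDB I}

lemma le_Phat {S : USeq I} {e : I × ℝ} (hS : S ∈ DB) (he : e ∈ S) : e.2 ≤ Phat DB e.1 :=
  le_unbotD_maximum_of_mem
    (mem_map_of_mem (mem_filter.mpr ⟨mem_flatten.mpr ⟨S, hS, he⟩, by simp⟩))

lemma Phat_nonneg (h0 : ∀ S ∈ DB, ∀ e ∈ S, 0 ≤ e.2) (i : I) : 0 ≤ Phat DB i := by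
  refine le_unbotD_maximum le_rfl fun a ha => ?_
  obtain ⟨e, he, rfl⟩ := mem_map.mp ha
  obtain ⟨S, hS, heS⟩ := mem_flatten.mp (mem_filter.mp he).1
  exact h0 S hS e heS

lemma maxPrDB_cons (DB : UDB I) (j : I) (γ : List I) :
    maxPrDB DB (j :: γ) = Phat DB j * maxPrDB (projDB [j] DB) γ := by
  show ∏ k : Fin (γ.length + 1), _ = _
  rw [Fin.prod_univ_succ]
  congr 1
  · simp
  · refine Finset.prod_congr rfl fun k _ => ?_
    rw [Fin.val_succ, take_succ_cons, ← singleton_append, projDB_append]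
    rfl

lemma maxPrDB_nonneg (h0 : ∀ S ∈ DB, ∀ e ∈ S, 0 ≤ e.2) (γ : List I) : 0 ≤ maxPrDB DB γ :=
  Finset.prod_nonneg fun _ _ => Phat_nonneg (projDB_forall h0 _) _

lemma prod_snd_le_maxPrDB (h0 : ∀ S ∈ DB, ∀ e ∈ S, 0 ≤ e.2) {S o : USeq I} (hS : S ∈ DB)
    (ho : o <+ S) : (o.map Prod.snd).prod ≤ maxPrDB DB (o.map Prod.fst) := by
  induction o generalizing DB S with
  | nil => exact (Fin.prod_univ_zero _).ge
  | cons e o ih =>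
    obtain ⟨S₁, hS₁, ho₁⟩ := exists_projSeq_singleton_of_cons_sublist ho
    have hrest := ih (projDB_forall h0 [e.1]) (mem_projDB.mpr ⟨S, hS, hS₁⟩) ho₁
    rw [map_cons, map_cons, prod_cons, maxPrDB_cons]
    exact mul_le_mul (le_Phat hS (ho.subset mem_cons_self)) hrest
      (prod_snd_nonneg fun f hf => h0 S hS f (ho.subset (mem_cons_of_mem e hf)))
      (Phat_nonneg h0 e.1)

end Probability

section ExpectedSupport

variable [DecidableEq I] {DB : UDB I}

lemma le_maxPrS {S o : USeq I} (ho : o <+ S) :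
    (o.map Prod.snd).prod ≤ maxPrS (o.map Prod.fst) S :=
  le_unbotD_maximum_of_mem (mem_map_of_mem (mem_filter.mpr ⟨mem_sublists.mpr ho, by simp⟩))

lemma maxPrS_le {α : List I} {S : USeq I} {c : ℝ} (hc : 0 ≤ c)
    (h : ∀ o, o <+ S → o.map Prod.fst = α → (o.map Prod.snd).prod ≤ c) : maxPrS α S ≤ c := by
  refine unbotD_maximum_le hc fun a ha => ?_
  obtain ⟨o, ho, rfl⟩ := mem_map.mp ha
  simp only [mem_filter, mem_sublists, decide_eq_true_eq] at ho
  exact h o ho.1 ho.2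

lemma le_maxPrS_of_forall {α : List I} {S : USeq I} {c : ℝ} (hc : c ≤ 0)
    (h : ∀ o, o <+ S → o.map Prod.fst = α → c ≤ (o.map Prod.snd).prod) : c ≤ maxPrS α S := by
  refine le_unbotD_maximum hc fun a ha => ?_
  obtain ⟨o, ho, rfl⟩ := mem_map.mp ha
  simp only [mem_filter, mem_sublists, decide_eq_true_eq] at ho
  exact h o ho.1 ho.2

lemma maxPrS_nonneg {α : List I} {S : USeq I} (h0 : ∀ e ∈ S, 0 ≤ e.2) : 0 ≤ maxPrS α S :=
  le_maxPrS_of_forall le_rfl fun _ ho _ => prod_snd_nonneg fun e he => h0 e (ho.subset he)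

lemma maxPrS_eq_zero {α : List I} {S : USeq I} (h : ¬Occurs α S) : maxPrS α S = 0 :=
  le_antisymm (maxPrS_le le_rfl fun o ho hm => absurd ⟨o, ho, hm⟩ h)
    (le_maxPrS_of_forall le_rfl fun o ho hm => absurd ⟨o, ho, hm⟩ h)

lemma expSup_nonneg (h0 : ∀ S ∈ DB, ∀ e ∈ S, 0 ≤ e.2) (α : List I) : 0 ≤ expSup DB α :=
  sum_nonneg fun a ha => by
    obtain ⟨S, hS, rfl⟩ := mem_map.mp ha
    exact maxPrS_nonneg (h0 S hS)

lemma expSup_eq_zero {α : List I} (h : ∀ S ∈ DB, ¬Occurs α S) : expSup DB α = 0 :=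
  sum_eq_zero fun a ha => by
    obtain ⟨S, hS, rfl⟩ := mem_map.mp ha
    exact maxPrS_eq_zero (h S hS)

lemma maxPrS_append_cons_le (hp : ∀ S ∈ DB, ∀ e ∈ S, e.2 ∈ Set.Icc (0 : ℝ) 1) {S : USeq I}
    (hS : S ∈ DB) (γ β : List I) (i : I) :
    maxPrS (γ ++ i :: β) S ≤ maxPrDB DB γ * ((projSeq γ S).map (maxPrS [i])).getD 0 := by
  have h0 : ∀ S ∈ DB, ∀ e ∈ S, 0 ≤ e.2 := fun S hS e he => (hp S hS e he).1
  have hγ := maxPrDB_nonneg h0 γ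
  refine maxPrS_le (mul_nonneg hγ ?_) fun o ho hm => ?_
  · cases hT : projSeq γ S with
    | none => exact le_rfl
    | some T => exact maxPrS_nonneg fun e he => h0 S hS e ((projSeq_suffix hT).subset he)
  obtain ⟨o₁, o₂, rfl, rfl, hm₂⟩ := map_eq_append_iff.mp hm
  obtain ⟨e, o₃, rfl, rfl, rfl⟩ := map_eq_cons_iff.mp hm₂
  obtain ⟨T, hT, he⟩ := exists_projSeq_of_append_sublist ho
  have hprob : ∀ f ∈ e :: o₃, f.2 ∈ Set.Icc (0 : ℝ) 1 :=
    fun f hf => hp S hS f ((projSeq_suffix hT).subset (he.subset hf))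
  have he0 : 0 ≤ e.2 := (hprob e mem_cons_self).1
  have ho₃ : ∀ f ∈ o₃, f.2 ∈ Set.Icc (0 : ℝ) 1 := fun f hf => hprob f (mem_cons_of_mem e hf)
  have hmatch : e.2 * (o₃.map Prod.snd).prod ≤ maxPrS [e.1] T :=
    calc e.2 * (o₃.map Prod.snd).prod ≤ e.2 := mul_le_of_le_one_right he0 (prod_snd_le_one ho₃)
      _ ≤ maxPrS [e.1] T := by
        simpa using le_maxPrS (singleton_sublist.mpr (he.subset mem_cons_self))
  rw [hT, Option.map_some, Option.getD_some, map_append, prod_append, map_cons, prod_cons]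
  exact mul_le_mul (prod_snd_le_maxPrDB h0 hS ((sublist_append_left _ _).trans ho)) hmatch
    (mul_nonneg he0 (prod_snd_nonneg fun f hf => (ho₃ f hf).1)) hγ

lemma expSupCap_concat (DB : UDB I) (γ : List I) (i : I) :
    expSupCap DB (γ ++ [i]) = maxPrDB DB γ * ((projDB γ DB).map (maxPrS [i])).sum := by
  simp [expSupCap]

lemma expSup_le_expSupCap (hp : ∀ S ∈ DB, ∀ e ∈ S, e.2 ∈ Set.Icc (0 : ℝ) 1)
    (γ β : List I) (i : I) : expSup DB (γ ++ i :: β) ≤ expSupCap DB (γ ++ [i]) := by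
  rw [expSupCap_concat, projDB, sum_map_filterMap, expSup, ← sum_map_mul_left]
  exact sum_le_sum fun S hS => maxPrS_append_cons_le hp hS γ β i

end ExpectedSupport

section Weight

variable {w : I → ℝ}

lemma sWeight_nonneg (hw : ∀ x, 0 ≤ w x) (α : List I) : 0 ≤ sWeight w α :=
  div_nonneg (sum_nonneg fun a ha => by
    obtain ⟨x, -, rfl⟩ := mem_map.mp ha
    exact hw x) α.length.cast_nonneg

lemma sWeight_le_of_forall_le {α : List I} {c : ℝ} (hα : α ≠ []) (h : ∀ x ∈ α, w x ≤ c) :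
    sWeight w α ≤ c := by
  rw [sWeight, div_le_iff₀ (by exact_mod_cast length_pos_iff.mpr hα)]
  calc (α.map w).sum ≤ (α.map w).length • c := sum_le_card_nsmul _ c fun a ha => by
        obtain ⟨x, hx, rfl⟩ := mem_map.mp ha
        exact h x hx
    _ = c * α.length := by rw [length_map, nsmul_eq_mul, mul_comm]

lemma le_mxWs {α : List I} {x : I} (hx : x ∈ α) : w x ≤ mxWs w α :=
  le_unbotD_maximum_of_mem (mem_map_of_mem hx)

lemma le_mxWDB {D : UDB I} {S : USeq I} {e : I × ℝ} (hS : S ∈ D) (he : e ∈ S) :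
    w e.1 ≤ mxWDB w D :=
  le_unbotD_maximum_of_mem (mem_map_of_mem (mem_flatten.mpr ⟨S, hS, he⟩))

variable [DecidableEq I] {DB : UDB I}

lemma wgtCap_nonneg (hw : ∀ x, 0 ≤ w x) (α : List I) : 0 ≤ wgtCap DB w α :=
  le_max_of_le_right (le_unbotD_maximum le_rfl fun a ha => by
    obtain ⟨x, -, rfl⟩ := mem_map.mp ha
    exact hw x)

lemma sWeight_le_wgtCap {S : USeq I} (hS : S ∈ DB) {γ β : List I} {i : I}
    (hocc : Occurs (γ ++ i :: β) S) : sWeight w (γ ++ i :: β) ≤ wgtCap DB w (γ ++ [i]) := by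
  obtain ⟨T, hT, o, ho, hm⟩ := hocc.exists_projSeq
  refine sWeight_le_of_forall_le (by simp) fun x hx => ?_
  rcases mem_append.mp hx with hx | hx
  · exact le_max_of_le_right (le_mxWs (mem_append_left _ hx))
  · obtain ⟨e, he, rfl⟩ := mem_map.mp (hm ▸ hx)
    rw [wgtCap, dropLast_concat]
    exact le_max_of_le_left (le_mxWDB (mem_projDB.mpr ⟨S, hS, hT⟩) (ho.subset he))

lemma WES_le_wExpSupCap (hp : ∀ S ∈ DB, ∀ e ∈ S, e.2 ∈ Set.Icc (0 : ℝ) 1)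
    (hw : ∀ x, 0 ≤ w x) (γ β : List I) (i : I) :
    WES DB w (γ ++ i :: β) ≤ wExpSupCap DB w (γ ++ [i]) := by
  have hexp := expSup_le_expSupCap hp γ β i
  have hcap : 0 ≤ expSupCap DB (γ ++ [i]) :=
    (expSup_nonneg (fun S hS e he => (hp S hS e he).1) _).trans hexp
  by_cases hocc : ∃ S ∈ DB, Occurs (γ ++ i :: β) S
  · obtain ⟨S, hS, hocc⟩ := hocc
    exact mul_le_mul hexp (sWeight_le_wgtCap hS hocc) (sWeight_nonneg hw _) hcap
  · rw [WES, expSup_eq_zero fun S hS h => hocc ⟨S, hS, h⟩, zero_mul]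
    exact mul_nonneg hcap (wgtCap_nonneg hw _)

end Weight

theorem pruning_condition_complete_general [DecidableEq I]
    (DB : UDB I) (hp : ∀ S ∈ DB, ∀ e ∈ S, e.2 ∈ Set.Icc (0 : ℝ) 1)
    (w : I → ℝ) (hw : ∀ x : I, w x ∈ Set.Icc (0 : ℝ) 1)
    (minWES : ℝ)
    (α : List I) (hWES : minWES ≤ WES DB w α) :
    ∀ γ : List I, γ ≠ [] → γ <+: α → minWES ≤ wExpSupCap DB w γ := by
  rintro γ hγ ⟨β, rfl⟩
  obtain ⟨γ, i, rfl⟩ := (eq_nil_or_concat' γ).resolve_left hγ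
  rw [append_assoc, singleton_append] at hWES
  exact hWES.trans (WES_le_wExpSupCap hp (fun x => (hw x).1) γ β i)

/-- Completeness of the pruning condition: if all probabilities lie in `[0,1]`, all
weights lie in `[0,1]`, `minWES > 0` and `α` is a nonempty pattern with
`WES(α) ≥ minWES`, then every nonempty prefix `γ` of `α` satisfies
`wExpSup^cap(γ) ≥ minWES`. -/
theorem pruning_condition_complete [DecidableEq I]
    (DB : UDB I) (hp : ∀ S ∈ DB, ∀ e ∈ S, e.2 ∈ Set.Icc (0 : ℝ) 1)
    (w : I → ℝ) (hw : ∀ x : I, w x ∈ Set.Icc (0 : ℝ) 1)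
    (minWES : ℝ) (hmin : 0 < minWES)
    (α : List I) (hα : α ≠ []) (hWES : minWES ≤ WES DB w α) :
    ∀ γ : List I, γ ≠ [] → γ <+: α → minWES ≤ wExpSupCap DB w γ :=
  pruning_condition_complete_general DB hp w hw minWES α hWES
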